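/- Let φ₀ < φ₁ and a < b be real numbers, Q := [φ₀,φ₁] × [a,b] ⊆ ℝ × ℝ, and let ∂ₚQ := ([φ₀,φ₁] × {a}) ∪ ({φ₀,φ₁} × [a,b]) be the parabolic boundary of Q. Let σ, v : ℝ × ℝ → ℝ be smooth functions with σ(φ,k) ≥ 0 for all (φ,k) ∈ Q, and suppose v = 0 on ∂ₚQ. Then sup_{(φ,k) ∈ Q} |v(φ,k)| ≤ (b − a) · sup_{(φ,k) ∈ Q} |∂_k v(φ,k) − σ(φ,k)·∂_φ² v(φ,k)|. In particular the inverse E of the linearised RG operator L(σ)v := ∂_k v − σ·∂_φ² v, subject to zero initial and boundary conditions, is continuous with respect to the uniform norm: ‖E(g)‖₀ ≤ C‖g‖₀ with C = b − a. -/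

import Mathlib

open Set

/-- Partial derivative in the first variable `φ` of a function on `ℝ × ℝ`. -/
noncomputable def pdφ (u : ℝ × ℝ → ℝ) : ℝ × ℝ → ℝ :=
  fun p => deriv (fun x => u (x, p.2)) p.1

/-- Partial derivative in the second variable `k` of a function on `ℝ × ℝ`. -/
noncomputable def pdk (u : ℝ × ℝ → ℝ) : ℝ × ℝ → ℝ :=
  fun p => deriv (fun y => u (p.1, y)) p.2

/-- `sup_{p ∈ Q} |u p|`, the uniform norm over `Q`. -/
noncomputable def supQ (Q : Set (ℝ × ℝ)) (u : ℝ × ℝ → ℝ) : ℝ :=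
  ⨆ p : Q, |u ↑p|

/- Auxiliary lemmas -/

lemma hasDerivAt_slice1 (u : ℝ × ℝ → ℝ) (hu : ContDiff ℝ (⊤ : ℕ∞) u) (x c : ℝ) :
    HasDerivAt (fun x' => u (x', c)) (fderiv ℝ u (x, c) (1, 0)) x := by
  have hu' : HasFDerivAt u (fderiv ℝ u (x, c)) (x, c) :=
    (hu.differentiable (by simp) (x, c)).hasFDerivAt
  have hg : HasDerivAt (fun x' : ℝ => (x', c)) ((1 : ℝ), (0 : ℝ)) x :=
    (hasDerivAt_id x).prodMk (hasDerivAt_const x c)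
  exact hu'.comp_hasDerivAt x hg

lemma hasDerivAt_slice2 (u : ℝ × ℝ → ℝ) (hu : ContDiff ℝ (⊤ : ℕ∞) u) (c y : ℝ) :
    HasDerivAt (fun y' => u (c, y')) (fderiv ℝ u (c, y) (0, 1)) y := by
  have hu' : HasFDerivAt u (fderiv ℝ u (c, y)) (c, y) :=
    (hu.differentiable (by simp) (c, y)).hasFDerivAt
  have hg : HasDerivAt (fun y' : ℝ => (c, y')) ((0 : ℝ), (1 : ℝ)) y :=
    (hasDerivAt_const y c).prodMk (hasDerivAt_id y)
  exact hu'.comp_hasDerivAt y hg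

lemma pdφ_eq (u : ℝ × ℝ → ℝ) (hu : ContDiff ℝ (⊤ : ℕ∞) u) :
    pdφ u = fun p => fderiv ℝ u p (1, 0) := by
  funext p
  exact (hasDerivAt_slice1 u hu p.1 p.2).deriv

lemma pdk_eq (u : ℝ × ℝ → ℝ) (hu : ContDiff ℝ (⊤ : ℕ∞) u) :
    pdk u = fun p => fderiv ℝ u p (0, 1) := by
  funext p
  exact (hasDerivAt_slice2 u hu p.1 p.2).deriv

lemma fderiv_apply_contDiff (u : ℝ × ℝ → ℝ) (hu : ContDiff ℝ (⊤ : ℕ∞) u) (w : ℝ × ℝ) :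
    ContDiff ℝ (⊤ : ℕ∞) (fun p => fderiv ℝ u p w) := by
  have h : ContDiff ℝ (⊤ : ℕ∞) (fderiv ℝ u) := by
    apply hu.fderiv_right
    exact_mod_cast le_top
  exact h.clm_apply contDiff_const

lemma pdφ_contDiff (u : ℝ × ℝ → ℝ) (hu : ContDiff ℝ (⊤ : ℕ∞) u) :
    ContDiff ℝ (⊤ : ℕ∞) (pdφ u) := by
  rw [pdφ_eq u hu]; exact fderiv_apply_contDiff u hu _

lemma pdk_contDiff (u : ℝ × ℝ → ℝ) (hu : ContDiff ℝ (⊤ : ℕ∞) u) :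
    ContDiff ℝ (⊤ : ℕ∞) (pdk u) := by
  rw [pdk_eq u hu]; exact fderiv_apply_contDiff u hu _

lemma pdφ_neg (u : ℝ × ℝ → ℝ) : pdφ (fun p => -u p) = fun p => -pdφ u p := by
  funext p
  exact deriv.neg

lemma pdk_neg (u : ℝ × ℝ → ℝ) : pdk (fun p => -u p) = fun p => -pdk u p := by
  funext p
  exact deriv.neg

/-- If `f` has a maximum over `[c, x]` at the right endpoint `x`, its derivative there is
nonnegative. -/
lemma deriv_nonneg_of_left_max {f : ℝ → ℝ} {x d c : ℝ} (hc : c < x)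
    (hd : HasDerivAt f d x) (h : ∀ y ∈ Icc c x, f y ≤ f x) : 0 ≤ d := by
  by_contra hneg
  push_neg at hneg
  have hslope := hasDerivAt_iff_tendsto_slope.1 hd
  have h1 : ∀ᶠ y in nhdsWithin x {x}ᶜ, slope f x y < 0 := hslope.eventually_lt_const hneg
  have h2 : ∀ᶠ y in nhdsWithin x (Iio x), slope f x y < 0 :=
    h1.filter_mono (nhdsWithin_mono x (fun y hy => ne_of_lt hy))
  have h3 : Ioo c x ∈ nhdsWithin x (Iio x) := Ioo_mem_nhdsLT_of_mem ⟨hc, le_refl x⟩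
  obtain ⟨y, hy1, hy2⟩ := (h2.and (Filter.eventually_of_mem h3 (fun y hy => hy))).exists
  rw [slope_def_field] at hy1
  have hyx : y - x < 0 := sub_neg.2 hy2.2
  rcases div_neg_iff.1 hy1 with ⟨h4, h5⟩ | ⟨h4, h5⟩
  · have := h y ⟨hy2.1.le, hy2.2.le⟩
    linarith
  · linarith

/-- Second derivative test: at a local maximum of a smooth function, the second derivative is
nonpositive. -/
lemma deriv2_nonpos_of_isLocalMax {f : ℝ → ℝ} (hf : ContDiff ℝ (⊤ : ℕ∞) f) {x : ℝ}
    (h : IsLocalMax f x) : deriv (deriv f) x ≤ 0 := by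
  by_contra hpos
  push_neg at hpos
  have hd1 : deriv f x = 0 := h.deriv_eq_zero
  have hg : ContDiff ℝ (⊤ : ℕ∞) (deriv f) := (contDiff_infty_iff_deriv.1 hf).2
  have hgd : HasDerivAt (deriv f) (deriv (deriv f) x) x :=
    (hg.differentiable (by simp) x).hasDerivAt
  have hslope := hasDerivAt_iff_tendsto_slope.1 hgd
  have h1 : ∀ᶠ y in nhdsWithin x {x}ᶜ, 0 < slope (deriv f) x y :=
    hslope.eventually_const_lt hpos
  have h2 : ∀ᶠ y in nhdsWithin x (Ioi x), 0 < slope (deriv f) x y :=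
    h1.filter_mono (nhdsWithin_mono x (fun y hy => ne_of_gt hy))
  obtain ⟨u, hu, hIoo⟩ := mem_nhdsGT_iff_exists_Ioo_subset.1 h2
  have hxu : x < u := hu
  have hderiv_pos : ∀ y ∈ Ioo x u, 0 < deriv f y := by
    intro y hy
    have hs := hIoo hy
    simp only [Set.mem_setOf_eq] at hs
    rw [slope_def_field, hd1, sub_zero] at hs
    have hyx : 0 < y - x := sub_pos.2 hy.1
    rcases div_pos_iff.1 hs with ⟨h4, h5⟩ | ⟨h4, h5⟩
    · exact h4
    · linarith
  set m := (x + u) / 2 with hm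
  have hxm : x < m := by rw [hm]; linarith
  have hmu : m < u := by rw [hm]; linarith
  have hmono : StrictMonoOn f (Icc x m) := by
    apply strictMonoOn_of_deriv_pos (convex_Icc x m) hf.continuous.continuousOn
    intro y hy
    rw [interior_Icc] at hy
    exact hderiv_pos y ⟨hy.1, hy.2.trans hmu⟩
  have h3 : ∀ᶠ y in nhdsWithin x (Ioi x), f y ≤ f x := h.filter_mono nhdsWithin_le_nhds
  have h4 : Ioo x m ∈ nhdsWithin x (Ioi x) := Ioo_mem_nhdsGT_of_mem ⟨le_refl x, hxm⟩
  obtain ⟨y, hy1, hy2⟩ := (h3.and (Filter.eventually_of_mem h4 (fun y hy => hy))).exists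
  have : f x < f y := hmono (left_mem_Icc.2 hxm.le) ⟨hy2.1.le, hy2.2.le⟩ hy2.1
  linarith

/-- One-sided maximum-principle estimate. -/
lemma key_estimate
    (φ0 φ1 a b : ℝ) (hφ : φ0 < φ1) (hab : a < b)
    (σ v : ℝ × ℝ → ℝ) (hv : ContDiff ℝ (⊤ : ℕ∞) v)
    (hσnonneg : ∀ p ∈ Icc φ0 φ1 ×ˢ Icc a b, 0 ≤ σ p)
    (hbdry : ∀ p ∈ (Icc φ0 φ1 ×ˢ ({a} : Set ℝ)) ∪ (({φ0, φ1} : Set ℝ) ×ˢ Icc a b),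
      v p = 0)
    (M : ℝ) (hM0 : 0 ≤ M)
    (hM : ∀ p ∈ Icc φ0 φ1 ×ˢ Icc a b, pdk v p - σ p * pdφ (pdφ v) p ≤ M) :
    ∀ p ∈ Icc φ0 φ1 ×ˢ Icc a b, v p ≤ (b - a) * M := by
  set Q := Icc φ0 φ1 ×ˢ Icc a b with hQ
  -- it suffices to prove the estimate with `M` replaced by `M + ε`
  suffices H : ∀ ε > (0 : ℝ), ∀ p ∈ Q, v p ≤ (b - a) * (M + ε) by
    intro p hp
    apply le_of_forall_pos_le_add
    intro ε hε
    have hε' : (0 : ℝ) < ε / (b - a) := div_pos hε (by linarith)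
    have := H (ε / (b - a)) hε' p hp
    have hba : (b - a) * (ε / (b - a)) = ε := by
      rw [mul_comm, div_mul_cancel₀ _ (by linarith : b - a ≠ 0)]
    calc v p ≤ (b - a) * (M + ε / (b - a)) := this
      _ = (b - a) * M + ε := by rw [mul_add, hba]
  intro ε hε
  set w : ℝ × ℝ → ℝ := fun p => v p - (M + ε) * (p.2 - a) with hw
  have hwcont : Continuous w := by
    apply (hv.continuous).sub
    exact (continuous_const.mul (continuous_snd.sub continuous_const))
  have hQcomp : IsCompact Q := isCompact_Icc.prod isCompact_Icc
  have hQne : Q.Nonempty := ⟨(φ0, a), ⟨⟨le_refl _, hφ.le⟩, ⟨le_refl _, hab.le⟩⟩⟩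
  obtain ⟨ps, hpsQ, hpsmax⟩ := hQcomp.exists_isMaxOn hQne hwcont.continuousOn
  obtain ⟨φs, ks⟩ := ps
  have hφs : φs ∈ Icc φ0 φ1 := hpsQ.1
  have hks : ks ∈ Icc a b := hpsQ.2
  -- if the max of w is ≤ 0, we are done
  by_cases hwpos : w (φs, ks) ≤ 0
  · intro p hp
    have h1 : w p ≤ w (φs, ks) := hpsmax hp
    have h2 : (M + ε) * (p.2 - a) ≤ (M + ε) * (b - a) := by
      apply mul_le_mul_of_nonneg_left _ (by linarith)
      have := hp.2.2
      linarith
    have : v p = w p + (M + ε) * (p.2 - a) := by rw [hw]; ring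
    rw [this]
    calc w p + (M + ε) * (p.2 - a) ≤ 0 + (M + ε) * (b - a) :=
          add_le_add (h1.trans hwpos) h2
      _ = (b - a) * (M + ε) := by ring
  -- otherwise derive a contradiction
  exfalso
  push_neg at hwpos
  -- the max point is not on the parabolic boundary
  have hksa : a < ks := by
    rcases lt_or_eq_of_le hks.1 with h | h
    · exact h
    · exfalso
      have : v (φs, ks) = 0 := hbdry _ (Or.inl ⟨hφs, by simp [← h]⟩)
      rw [hw] at hwpos
      simp only at hwpos
      rw [this, ← h] at hwpos
      simp at hwpos
  have hφs0 : φ0 < φs := by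
    rcases lt_or_eq_of_le hφs.1 with h | h
    · exact h
    · exfalso
      have hv0 : v (φs, ks) = 0 := hbdry _ (Or.inr ⟨by simp [← h], hks⟩)
      rw [hw] at hwpos
      simp only [hv0] at hwpos
      nlinarith [hks.1]
  have hφs1 : φs < φ1 := by
    rcases lt_or_eq_of_le hφs.2 with h | h
    · exact h
    · exfalso
      have hv0 : v (φs, ks) = 0 := hbdry _ (Or.inr ⟨by simp [h], hks⟩)
      rw [hw] at hwpos
      simp only [hv0] at hwpos
      nlinarith [hks.1]
  -- φ-direction: second derivative test
  set f : ℝ → ℝ := fun x => v (x, ks) with hf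
  have hfC : ContDiff ℝ (⊤ : ℕ∞) f := hv.comp (contDiff_id.prodMk contDiff_const)
  have hlocmax : IsLocalMax f φs := by
    have hmem : Icc φ0 φ1 ∈ nhds φs := Icc_mem_nhds hφs0 hφs1
    apply Filter.eventually_of_mem hmem
    intro x hx
    have h1 : w (x, ks) ≤ w (φs, ks) := hpsmax ⟨hx, hks⟩
    rw [hw] at h1
    simpa using h1
  have hd2 : deriv (deriv f) φs ≤ 0 := deriv2_nonpos_of_isLocalMax hfC hlocmax
  have hpdφ2 : pdφ (pdφ v) (φs, ks) = deriv (deriv f) φs := by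
    have : (fun x => pdφ v (x, ks)) = deriv f := by
      funext x
      rfl
    show deriv (fun x => pdφ v (x, ks)) φs = deriv (deriv f) φs
    rw [this]
  -- k-direction: left derivative at the max point
  set g : ℝ → ℝ := fun y => v (φs, y) with hg
  have hgd : HasDerivAt g (pdk v (φs, ks)) ks := by
    have := hasDerivAt_slice2 v hv φs ks
    have heq : pdk v (φs, ks) = fderiv ℝ v (φs, ks) (0, 1) := by
      rw [pdk_eq v hv]
    rw [heq]
    exact this
  have hhd : HasDerivAt (fun y => g y - (M + ε) * (y - a)) (pdk v (φs, ks) - (M + ε)) ks := by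
    have h2 : HasDerivAt (fun y : ℝ => (M + ε) * (y - a)) (M + ε) ks := by
      simpa using ((hasDerivAt_id ks).sub_const a).const_mul (M + ε)
    exact hgd.sub h2
  have hleftmax : ∀ y ∈ Icc a ks, g y - (M + ε) * (y - a) ≤ g ks - (M + ε) * (ks - a) := by
    intro y hy
    have hyQ : (φs, y) ∈ Q := ⟨hφs, ⟨hy.1, hy.2.trans hks.2⟩⟩
    have := hpsmax hyQ
    rw [hw] at this
    simpa using this
  have hpdk : 0 ≤ pdk v (φs, ks) - (M + ε) :=
    deriv_nonneg_of_left_max hksa hhd hleftmax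
  -- combine
  have hMps := hM (φs, ks) hpsQ
  have hσps := hσnonneg (φs, ks) hpsQ
  have hprod : σ (φs, ks) * pdφ (pdφ v) (φs, ks) ≤ 0 := by
    rw [hpdφ2]
    exact mul_nonpos_of_nonneg_of_nonpos hσps hd2
  linarith

/-- Uniform-norm continuity estimate for the inverse of the linearised RG operator:
`sup_Q |v| ≤ (b - a) * sup_Q |∂_k v - σ ∂_φ² v|` when `v` vanishes on the parabolic
boundary and `σ ≥ 0` on `Q`. -/
theorem uniform_continuity_of_inverse
    (φ0 φ1 a b : ℝ) (hφ : φ0 < φ1) (hab : a < b)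
    (σ v : ℝ × ℝ → ℝ) (hσ : ContDiff ℝ (⊤ : ℕ∞) σ) (hv : ContDiff ℝ (⊤ : ℕ∞) v)
    (hσnonneg : ∀ p ∈ Icc φ0 φ1 ×ˢ Icc a b, 0 ≤ σ p)
    (hbdry : ∀ p ∈ (Icc φ0 φ1 ×ˢ ({a} : Set ℝ)) ∪ (({φ0, φ1} : Set ℝ) ×ˢ Icc a b),
      v p = 0) :
    supQ (Icc φ0 φ1 ×ˢ Icc a b) v ≤
      (b - a) * supQ (Icc φ0 φ1 ×ˢ Icc a b)
        (fun p => pdk v p - σ p * pdφ (pdφ v) p) := by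
  set Q := Icc φ0 φ1 ×ˢ Icc a b with hQ
  have hv' : ContDiff ℝ (⊤ : ℕ∞) v := hv.of_le (by simp)
  have hσ' : ContDiff ℝ (⊤ : ℕ∞) σ := hσ.of_le (by simp)
  set g : ℝ × ℝ → ℝ := fun p => pdk v p - σ p * pdφ (pdφ v) p with hg
  have hgcont : Continuous g := by
    apply ((pdk_contDiff v hv').continuous).sub
    exact hσ'.continuous.mul (pdφ_contDiff _ (pdφ_contDiff v hv')).continuous
  have hQcomp : IsCompact Q := isCompact_Icc.prod isCompact_Icc
  have hp0Q : (φ0, a) ∈ Q := ⟨⟨le_refl _, hφ.le⟩, ⟨le_refl _, hab.le⟩⟩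
  haveI : Nonempty ↥Q := ⟨⟨(φ0, a), hp0Q⟩⟩
  have hbdd : BddAbove (Set.range (fun p : Q => |g ↑p|)) := by
    have h1 : BddAbove ((fun p => |g p|) '' Q) :=
      (hQcomp.image (hgcont.abs)).bddAbove
    have h2 : Set.range (fun p : Q => |g ↑p|) = (fun p => |g p|) '' Q := by
      rw [← Set.range_restrict]
      rfl
    rwa [h2]
  set M := supQ Q g with hMdef
  have hle : ∀ p ∈ Q, |g p| ≤ M := by
    intro p hp
    exact le_ciSup hbdd ⟨p, hp⟩
  have hM0 : 0 ≤ M := (abs_nonneg _).trans (hle _ hp0Q)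
  have hMg : ∀ p ∈ Q, pdk v p - σ p * pdφ (pdφ v) p ≤ M :=
    fun p hp => (le_abs_self _).trans (hle p hp)
  have hMg' : ∀ p ∈ Q, pdk (fun q => -v q) p - σ p * pdφ (pdφ (fun q => -v q)) p ≤ M := by
    intro p hp
    rw [pdk_neg, pdφ_neg]
    have heq : pdφ (fun p => -pdφ v p) p = -pdφ (pdφ v) p := pdφ_neg (pdφ v) ▸ congrFun (pdφ_neg (pdφ v)) p
    rw [heq]
    have : -pdk v p - σ p * -pdφ (pdφ v) p = -(pdk v p - σ p * pdφ (pdφ v) p) := by ring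
    rw [this]
    exact (neg_le_abs _).trans (hle p hp)
  have hupper : ∀ p ∈ Q, v p ≤ (b - a) * M :=
    key_estimate φ0 φ1 a b hφ hab σ v hv' hσnonneg hbdry M hM0 hMg
  have hlower : ∀ p ∈ Q, -v p ≤ (b - a) * M := by
    have hbdry' : ∀ p ∈ (Icc φ0 φ1 ×ˢ ({a} : Set ℝ)) ∪ (({φ0, φ1} : Set ℝ) ×ˢ Icc a b),
        (fun q => -v q) p = 0 := by
      intro p hp
      simp [hbdry p hp]
    exact key_estimate φ0 φ1 a b hφ hab σ (fun q => -v q) hv'.neg hσnonneg hbdry' M hM0 hMg'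
  apply ciSup_le
  intro p
  exact abs_le.2 ⟨by linarith [hlower p p.2], hupper p p.2⟩
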